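/- Let d, d₁ ≥ 1, T > 0, let u : [0,T] × ℝ^d → ℝ^{d₁} be continuously differentiable in time and twice continuously differentiable in space, and let u₀ : ℝ^d → ℝ^{d₁}. Let a(x) ∈ ℝ^d, A(x) ∈ ℝ^{d×d}, c(x) ∈ ℝ^{d₁×d₁}, C(x) = (C_{mlk}(x)) ∈ ℝ^{d₁×d₁×d} and g : [0,T] × ℝ^d × ℝ^{d₁} × ℝ^{d×d₁} → ℝ^{d₁} be given. Define Φ(s,x,h) = ⟨h, u(s,x)⟩, the enlarged drift q(x,h) = (a(x), c(x)h) ∈ ℝ^{d+d₁}, the enlarged diffusion Q(x,h) : ℝ^d → ℝ^{d+d₁} by Q(x,h)w = (A(x)w, C(x)(h,w)) with C(x)(h,w)_m = Σ_{l,k} C_{mlk}(x) h_l w_k, the matrix K(s,x) ∈ ℝ^{d×d₁} by K_{kl}(s,x) = Σ_m C_{mlk}(x) u_m(s,x) + Σ_j A_{jk}(x) ∂_j u_l(s,x), and G(s,x,h) = ⟨h, g(s,x, u(s,x), K(s,x))⟩. Then the following are equivalent: (i) for every l ∈ {1,…,d₁} and every (s,x) ∈ [0,T] × ℝ^d, ∂_s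 u_l + ½ Tr(Aᵀ∇²u_l A) + ⟨a, ∇u_l⟩ + Σ_{m,j,k} C_{mlk} A_{jk} ∂_j u_m + Σ_m c_{ml} u_m + g_l(s,x,u(s,x),K(s,x)) = 0 and u(T,x) = u₀(x); (ii) for every h ∈ ℝ^{d₁} and every (s,x) ∈ [0,T] × ℝ^d, ∂_s Φ(s,x,h) + ½ Tr(Q(x,h)ᵀ D²Φ(s,x,h) Q(x,h)) + ⟨q(x,h), ∇Φ(s,x,h)⟩ + G(s,x,h) = 0 and Φ(T,x,h) = ⟨h, u₀(x)⟩, where ∇Φ and D²Φ are taken in the variables (x,h). -/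

import Mathlib

/-!
`Φ(s, x, h) = ⟨h, u(s, x)⟩` is linear in `h`, so every term of the scalar operator at `(x, h)`
is `⟨h, ·⟩` applied to a term of the system. The only non-obvious one is the second derivative
along `Q(x, h) e_k = (A e_k, C(h, e_k))`: since `∂²_h Φ = 0`, it consists of `⟨h, ∂²_x u⟩` plus
twice the mixed term `⟨C(h, e_k), ∂_x u · A e_k⟩`, which after the factor `1/2` is exactly the
nondiagonal first-order coupling `Σ C_{mlk} A_{jk} ∂_j u_m`. The equivalence then holds because
a vector vanishes iff its pairing with every `h` does.
-/

open Finset ContinuousLinearMap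

theorem HasFDerivAt.comp_fst {E F : Type*} [NormedAddCommGroup E] [NormedSpace ℝ E]
    [NormedAddCommGroup F] [NormedSpace ℝ F] {g : E → ℝ} {g' : E →L[ℝ] ℝ} {x : E}
    (hg : HasFDerivAt g g' x) (y : F) :
    HasFDerivAt (fun p : E × F => g p.1) (g'.comp (fst ℝ E F)) (x, y) :=
  hg.comp (f := Prod.fst) (x, y) hasFDerivAt_fst

theorem hasFDerivAt_snd_apply {E ι : Type*} [NormedAddCommGroup E] [NormedSpace ℝ E]
    (p : E × (ι → ℝ)) (m : ι) :
    HasFDerivAt (fun q : E × (ι → ℝ) => q.2 m) ((proj m).comp (snd ℝ E (ι → ℝ))) p :=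
  ((proj m).comp (snd ℝ E (ι → ℝ))).hasFDerivAt

section Pairing

variable {E ι : Type*} [NormedAddCommGroup E] [NormedSpace ℝ E] [Fintype ι]

theorem fderiv_pairing_apply {f : E → ι → ℝ} {x : E} (hf : DifferentiableAt ℝ f x)
    (h : ι → ℝ) (v : E) (w : ι → ℝ) :
    fderiv ℝ (fun p : E × (ι → ℝ) => ∑ m, p.2 m * f p.1 m) (x, h) (v, w)
      = ∑ m, (h m * fderiv ℝ (fun y => f y m) x v + w m * f x m) := by
  have hf_fst (m : ι) := (differentiableAt_pi.mp hf m).hasFDerivAt.comp_fst h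
  rw [(HasFDerivAt.fun_sum fun m _ => (hasFDerivAt_snd_apply _ m).fun_mul (hf_fst m)).fderiv]
  simp [add_comm, mul_comm]

theorem fderiv_fderiv_pairing_apply {f : E → ι → ℝ} (hf : ContDiff ℝ 2 f)
    (x v : E) (h w : ι → ℝ) :
    fderiv ℝ (fun p => fderiv ℝ (fun q : E × (ι → ℝ) => ∑ m, q.2 m * f q.1 m) p (v, w))
        (x, h) (v, w)
      = ∑ m, (h m * fderiv ℝ (fun y => fderiv ℝ (fun y' => f y' m) y v) x v
          + 2 * (w m * fderiv ℝ (fun y => f y m) x v)) := by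
  have hfm (m : ι) : ContDiff ℝ 2 (fun y => f y m) := contDiff_pi.mp hf m
  have hDf (m : ι) : ContDiff ℝ 1 (fun y => fderiv ℝ (fun y' => f y' m) y v) :=
    ((hfm m).fderiv_right (by norm_num)).clm_apply contDiff_const
  have hfirst : (fun p : E × (ι → ℝ) =>
        fderiv ℝ (fun q : E × (ι → ℝ) => ∑ m, q.2 m * f q.1 m) p (v, w))
      = fun p => ∑ m, (p.2 m * fderiv ℝ (fun y => f y m) p.1 v + w m * f p.1 m) := by
    ext ⟨y, k⟩
    exact fderiv_pairing_apply (hf.differentiable (by norm_num) y) k v w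
  have hf_fst (m : ι) := ((hfm m).differentiable (by norm_num) x).hasFDerivAt.comp_fst h
  have hDf_fst (m : ι) := ((hDf m).differentiable (by norm_num) x).hasFDerivAt.comp_fst h
  rw [hfirst, (HasFDerivAt.fun_sum fun m _ => ((hasFDerivAt_snd_apply _ m).fun_mul
    (hDf_fst m)).fun_add ((hf_fst m).const_mul (w m))).fderiv]
  simp only [_root_.sum_apply, add_apply, smul_apply, comp_apply, coe_fst', coe_snd', proj_apply,
    smul_eq_mul]
  exact sum_congr rfl fun m _ => by ring

end Pairing

theorem deriv_sum_const_mul_apply {ι : Type*} [Fintype ι] {φ : ℝ → ι → ℝ} {s : ℝ}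
    (hφ : DifferentiableAt ℝ φ s) (h : ι → ℝ) :
    deriv (fun t => ∑ m, h m * φ t m) s = ∑ m, h m * deriv (fun t => φ t m) s := by
  have hφm (m : ι) : DifferentiableAt ℝ (fun t => φ t m) s := differentiableAt_pi.mp hφ m
  rw [deriv_fun_sum fun m _ => (hφm m).const_mul (h m)]
  exact sum_congr rfl fun m _ => deriv_const_mul (h m) (hφm m)

theorem ContinuousLinearMap.apply_eq_sum_mul_apply_single {κ : Type*} [Fintype κ] [DecidableEq κ]
    (φ : (κ → ℝ) →L[ℝ] ℝ) (v : κ → ℝ) : φ v = ∑ j, v j * φ (Pi.single j 1) := by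
  conv_lhs => rw [pi_eq_sum_univ' v]
  simp [map_sum, map_smul]

theorem sum_sum_sum_mul_sum_eq_sum_mul_sum_sum_sum {R ι κ : Type*} [CommSemiring R]
    [Fintype ι] [Fintype κ] (C : ι → ι → κ → R) (A : Matrix κ κ R) (D : ι → κ → R) (h : ι → R) :
    ∑ k, ∑ m, (∑ l, C m l k * h l) * ∑ j, A j k * D m j
      = ∑ l, h l * ∑ m, ∑ j, ∑ k, C m l k * A j k * D m j := by
  simp only [sum_mul, mul_sum]
  calc _ = ∑ m, ∑ j, ∑ l, ∑ k, h l * (C m l k * A j k * D m j) := by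
        rw [sum_comm]; refine sum_congr rfl fun m _ => ?_
        rw [sum_comm]; refine sum_congr rfl fun j _ => ?_
        rw [sum_comm]; exact sum_congr rfl fun l _ => sum_congr rfl fun k _ => by ring
    _ = ∑ m, ∑ l, ∑ j, ∑ k, h l * (C m l k * A j k * D m j) := sum_congr rfl fun m _ => sum_comm
    _ = _ := sum_comm

theorem forall_sum_mul_eq_iff {R ι : Type*} [CommSemiring R] [Fintype ι] {v w : ι → R} :
    (∀ h : ι → R, ∑ m, h m * v m = ∑ m, h m * w m) ↔ v = w := by
  refine (forall_congr' fun h => ?_).trans dotProduct_eq_iff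
  rw [dotProduct_comm v, dotProduct_comm w]
  rfl

theorem scalar_residual_eq_sum_mul_system_residual {κ ι : Type*} [Fintype κ] [DecidableEq κ]
    [Fintype ι] {u : ℝ → (κ → ℝ) → ι → ℝ} {s : ℝ} {x : κ → ℝ}
    (hu_time : DifferentiableAt ℝ (fun t => u t x) s) (hu_space : ContDiff ℝ 2 (u s))
    (a : κ → ℝ) (A : Matrix κ κ ℝ) (c : Matrix ι ι ℝ) (C : ι → ι → κ → ℝ) (G h : ι → ℝ) :
    deriv (fun t => ∑ m, h m * u t x m) s
        + 1 / 2 * ∑ k, fderiv ℝ (fun p => fderiv ℝ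
            (fun q : (κ → ℝ) × (ι → ℝ) => ∑ m, q.2 m * u s q.1 m) p
            (fun j => A j k, fun m => ∑ l, C m l k * h l)) (x, h)
            (fun j => A j k, fun m => ∑ l, C m l k * h l)
        + fderiv ℝ (fun q : (κ → ℝ) × (ι → ℝ) => ∑ m, q.2 m * u s q.1 m) (x, h)
            (a, fun m => ∑ l, c m l * h l)
        + ∑ m, h m * G m
      = ∑ l, h l * (deriv (fun t => u t x l) s
          + 1 / 2 * ∑ k, fderiv ℝ (fun y => fderiv ℝ (fun y' => u s y' l) y (fun j => A j k)) x
              (fun j => A j k)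
          + fderiv ℝ (fun y => u s y l) x a
          + ∑ m, ∑ j, ∑ k, C m l k * A j k * fderiv ℝ (fun y => u s y m) x (Pi.single j 1)
          + ∑ m, c m l * u s x m
          + G l) := by
  have hdiffusion (X : ι → κ → ℝ) :
      1 / 2 * ∑ k, ∑ m, h m * X m k = ∑ m, h m * (1 / 2 * ∑ k, X m k) := by
    rw [sum_comm]
    simp only [mul_sum]
    exact sum_congr rfl fun m _ => sum_congr rfl fun k _ => by ring
  have hcoupling (r : ι → ℝ) : ∑ m, (∑ l, c m l * h l) * r m = ∑ l, h l * ∑ m, c m l * r m := by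
    simp only [sum_mul, mul_sum]
    rw [sum_comm]
    exact sum_congr rfl fun l _ => sum_congr rfl fun m _ => by ring
  rw [deriv_sum_const_mul_apply hu_time,
    fderiv_pairing_apply (hu_space.differentiable two_ne_zero x)]
  simp only [fderiv_fderiv_pairing_apply hu_space,
    (fderiv ℝ (fun y => u s y _) x).apply_eq_sum_mul_apply_single (fun j => A _ _)]
  simp only [mul_add, sum_add_distrib, ← mul_sum, sum_sum_sum_mul_sum_eq_sum_mul_sum_sum_sum,
    hdiffusion, hcoupling]
  ring

theorem system_scalar_cauchy_equivalence_general
    (d d₁ : ℕ) (T : ℝ)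
    (u : ℝ → (Fin d → ℝ) → (Fin d₁ → ℝ))
    (hu_time : ∀ x, ContDiff ℝ 1 (fun s => u s x))
    (hu_space : ∀ s, ContDiff ℝ 2 (fun x => u s x))
    (u₀ : (Fin d → ℝ) → (Fin d₁ → ℝ))
    (a : (Fin d → ℝ) → (Fin d → ℝ))
    (A : (Fin d → ℝ) → Matrix (Fin d) (Fin d) ℝ)
    (c : (Fin d → ℝ) → Matrix (Fin d₁) (Fin d₁) ℝ)
    (C : (Fin d → ℝ) → Fin d₁ → Fin d₁ → Fin d → ℝ)
    (g : ℝ → (Fin d → ℝ) → (Fin d₁ → ℝ) → (Fin d → Fin d₁ → ℝ) → (Fin d₁ → ℝ)) :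
    -- the gradient coupling `K(s,x)_{kl} = Σ_m C_{mlk} u_m + Σ_j A_{jk} ∂_j u_l`
    let K : ℝ → (Fin d → ℝ) → Fin d → Fin d₁ → ℝ := fun s x k l =>
      (∑ m, C x m l k * u s x m) +
        ∑ j, A x j k * fderiv ℝ (fun y => u s y l) x (Pi.single j 1)
    -- `Φ(s,x,h) = ⟨h, u(s,x)⟩`
    let Φ : ℝ → (Fin d → ℝ) × (Fin d₁ → ℝ) → ℝ := fun s p => ∑ m, p.2 m * u s p.1 m
    -- the `k`-th column `(A e_k, C(h, e_k))` of the enlarged diffusion `Q(x,h)`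
    let Qcol : (Fin d → ℝ) → (Fin d₁ → ℝ) → Fin d → (Fin d → ℝ) × (Fin d₁ → ℝ) :=
      fun x h k => ((fun j => A x j k), (fun m => ∑ l, C x m l k * h l))
    -- (i) the system of quasilinear parabolic equations with terminal data `u₀`
    ((∀ l : Fin d₁, ∀ s ∈ Set.Icc 0 T, ∀ x : Fin d → ℝ,
        deriv (fun t => u t x l) s
          + (1 / 2) * (∑ k, fderiv ℝ
              (fun y => fderiv ℝ (fun y' => u s y' l) y (fun j => A x j k)) x
              (fun j => A x j k))
          + fderiv ℝ (fun y => u s y l) x (a x)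
          + (∑ m, ∑ j, ∑ k, C x m l k * A x j k *
              fderiv ℝ (fun y => u s y m) x (Pi.single j 1))
          + (∑ m, c x m l * u s x m)
          + g s x (u s x) (K s x) l = 0)
      ∧ (∀ x, u T x = u₀ x))
    ↔
    -- (ii) the scalar parabolic equation in the enlarged phase space
    ((∀ h : Fin d₁ → ℝ, ∀ s ∈ Set.Icc 0 T, ∀ x : Fin d → ℝ,
        deriv (fun t => Φ t (x, h)) s
          + (1 / 2) * (∑ k, fderiv ℝ
              (fun p => fderiv ℝ (Φ s) p (Qcol x h k)) (x, h) (Qcol x h k))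
          + fderiv ℝ (Φ s) (x, h) (a x, fun m => ∑ l, c x m l * h l)
          + (∑ m, h m * g s x (u s x) (K s x) m) = 0)
      ∧ (∀ (x : Fin d → ℝ) (h : Fin d₁ → ℝ), Φ T (x, h) = ∑ m, h m * u₀ x m)) := by
  intro K Φ Qcol
  have hresidual (h : Fin d₁ → ℝ) (s : ℝ) (x : Fin d → ℝ) :=
    scalar_residual_eq_sum_mul_system_residual ((hu_time x).differentiable one_ne_zero s)
      (hu_space s) (a x) (A x) (c x) (C x) (g s x (u s x) (K s x)) h
  refine and_congr ⟨fun hsys h s hs x => ?_, fun hscalar l s hs x => ?_⟩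
    (forall_congr' fun x => forall_sum_mul_eq_iff.symm)
  · rw [hresidual]
    exact sum_eq_zero fun l _ => by rw [hsys l s hs x, mul_zero]
  · exact (single_one_dotProduct l _).symm.trans
      ((hresidual _ s x).symm.trans (hscalar _ s hs x))

/-- Reduction of the Cauchy problem for the system of quasilinear parabolic
equations (1.1)/(4.5), with nondiagonal first-order coefficients
`B^j_{lm} = Σ_k C_{mlk} A_{jk}` and gradient coupling `K = Cᵀu + Aᵀ∇u`, to the
Cauchy problem for a single scalar quasilinear parabolic equation (1.8)/(4.6)
in the enlarged phase space `ℝ^d × ℝ^{d₁}`, via `Φ(s,x,h) = ⟨h, u(s,x)⟩`. -/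
theorem system_scalar_cauchy_equivalence
    (d d₁ : ℕ) (hd : 1 ≤ d) (hd₁ : 1 ≤ d₁) (T : ℝ) (hT : 0 < T)
    (u : ℝ → (Fin d → ℝ) → (Fin d₁ → ℝ))
    (hu_time : ∀ x, ContDiff ℝ 1 (fun s => u s x))
    (hu_space : ∀ s, ContDiff ℝ 2 (fun x => u s x))
    (u₀ : (Fin d → ℝ) → (Fin d₁ → ℝ))
    (a : (Fin d → ℝ) → (Fin d → ℝ))
    (A : (Fin d → ℝ) → Matrix (Fin d) (Fin d) ℝ)
    (c : (Fin d → ℝ) → Matrix (Fin d₁) (Fin d₁) ℝ)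
    (C : (Fin d → ℝ) → Fin d₁ → Fin d₁ → Fin d → ℝ)
    (g : ℝ → (Fin d → ℝ) → (Fin d₁ → ℝ) → (Fin d → Fin d₁ → ℝ) → (Fin d₁ → ℝ)) :
    -- the gradient coupling `K(s,x)_{kl} = Σ_m C_{mlk} u_m + Σ_j A_{jk} ∂_j u_l`
    let K : ℝ → (Fin d → ℝ) → Fin d → Fin d₁ → ℝ := fun s x k l =>
      (∑ m, C x m l k * u s x m) +
        ∑ j, A x j k * fderiv ℝ (fun y => u s y l) x (Pi.single j 1)
    -- `Φ(s,x,h) = ⟨h, u(s,x)⟩`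
    let Φ : ℝ → (Fin d → ℝ) × (Fin d₁ → ℝ) → ℝ := fun s p => ∑ m, p.2 m * u s p.1 m
    -- the `k`-th column `(A e_k, C(h, e_k))` of the enlarged diffusion `Q(x,h)`
    let Qcol : (Fin d → ℝ) → (Fin d₁ → ℝ) → Fin d → (Fin d → ℝ) × (Fin d₁ → ℝ) :=
      fun x h k => ((fun j => A x j k), (fun m => ∑ l, C x m l k * h l))
    -- (i) the system of quasilinear parabolic equations with terminal data `u₀`
    ((∀ l : Fin d₁, ∀ s ∈ Set.Icc 0 T, ∀ x : Fin d → ℝ,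
        deriv (fun t => u t x l) s
          + (1 / 2) * (∑ k, fderiv ℝ
              (fun y => fderiv ℝ (fun y' => u s y' l) y (fun j => A x j k)) x
              (fun j => A x j k))
          + fderiv ℝ (fun y => u s y l) x (a x)
          + (∑ m, ∑ j, ∑ k, C x m l k * A x j k *
              fderiv ℝ (fun y => u s y m) x (Pi.single j 1))
          + (∑ m, c x m l * u s x m)
          + g s x (u s x) (K s x) l = 0)
      ∧ (∀ x, u T x = u₀ x))
    ↔
    -- (ii) the scalar parabolic equation in the enlarged phase space
    ((∀ h : Fin d₁ → ℝ, ∀ s ∈ Set.Icc 0 T, ∀ x : Fin d → ℝ,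
        deriv (fun t => Φ t (x, h)) s
          + (1 / 2) * (∑ k, fderiv ℝ
              (fun p => fderiv ℝ (Φ s) p (Qcol x h k)) (x, h) (Qcol x h k))
          + fderiv ℝ (Φ s) (x, h) (a x, fun m => ∑ l, c x m l * h l)
          + (∑ m, h m * g s x (u s x) (K s x) m) = 0)
      ∧ (∀ (x : Fin d → ℝ) (h : Fin d₁ → ℝ), Φ T (x, h) = ∑ m, h m * u₀ x m)) :=
  system_scalar_cauchy_equivalence_general d d₁ T u hu_time hu_space u₀ a A c C g
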